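/- arXiv:2504.05540 — 3 statements merged into one kernel-verified Lean document; each statement's English description precedes it below -/
import Mathlib

section
/- Let f : [0,∞) → [0,∞) be decreasing, and let S, ξ be real random variables on the same probability space with ξ ≤ S almost surely and S ≥ 0 almost surely. Then for every λ > 0, ∫₀^∞ e^{−λx} E[1_{{S < x}} f(x − ξ)] dx ≤ E[e^{−λS}] · ∫₀^∞ e^{−λx} f(x) dx. -/
/-!
Swap the two integrals by Tonelli. For a fixed outcome with `ξ ≤ S` and `0 ≤ S`, the inner Laplace
integral runs over `x > S`, where `x - ξ ≥ x - S > 0`, so monotonicity of `f` bounds `f (x - ξ)` by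
`f (x - S)`; the substitution `x = y + S` then pulls out the factor `e^{-λS}`.
-/

open MeasureTheory Set

open scoped ENNReal

lemma setLIntegral_Ioi_eq_comp_add_right (g : ℝ → ℝ≥0∞) (s : ℝ) :
    ∫⁻ x in Ioi s, g x = ∫⁻ y in Ioi 0, g (y + s) := by
  rw [← (measurePreserving_add_right volume s).setLIntegral_comp_preimage_emb
    (measurableEmbedding_addRight s) g]
  simp

lemma laplace_indicator_Ioi_comp_sub_le {f : ℝ → ℝ} (hf_anti : AntitoneOn f (Ici 0)) (l : ℝ)
    {s t : ℝ} (hs : 0 ≤ s) (hts : t ≤ s) :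
    ∫⁻ x in Ioi 0, ENNReal.ofReal (Real.exp (-l * x)) *
        (Ioi s).indicator (fun x => ENNReal.ofReal (f (x - t))) x
      ≤ ENNReal.ofReal (Real.exp (-l * s)) *
          ∫⁻ x in Ioi 0, ENNReal.ofReal (Real.exp (-l * x) * f x) := by
  have h_restrict : ∫⁻ x in Ioi 0, ENNReal.ofReal (Real.exp (-l * x)) *
        (Ioi s).indicator (fun x => ENNReal.ofReal (f (x - t))) x
      = ∫⁻ x in Ioi s, ENNReal.ofReal (Real.exp (-l * x)) * ENNReal.ofReal (f (x - t)) := by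
    simp_rw [← indicator_mul_right (Ioi s) fun x => ENNReal.ofReal (Real.exp (-l * x))]
    rw [lintegral_indicator measurableSet_Ioi, Measure.restrict_restrict measurableSet_Ioi,
      inter_eq_left.2 (Ioi_subset_Ioi hs)]
  rw [h_restrict, setLIntegral_Ioi_eq_comp_add_right,
    ← lintegral_const_mul' _ _ ENNReal.ofReal_ne_top]
  refine setLIntegral_mono' measurableSet_Ioi fun y (hy : 0 < y) => ?_
  have h_exp : Real.exp (-l * (y + s)) = Real.exp (-l * s) * Real.exp (-l * y) := by
    rw [← Real.exp_add]; ring_nf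
  have h_f : f (y + s - t) ≤ f y := hf_anti hy.le (by simp only [mem_Ici]; linarith) (by linarith)
  rw [h_exp, ENNReal.ofReal_mul (Real.exp_pos _).le, ENNReal.ofReal_mul (Real.exp_pos _).le,
    mul_assoc]
  gcongr

theorem stmt_5_general {Ω : Type*} [MeasurableSpace Ω] (P : Measure Ω) [IsProbabilityMeasure P]
    (f : ℝ → ℝ) (hf_meas : Measurable f)
    (hf_anti : AntitoneOn f (Set.Ici 0))
    (S ξ : Ω → ℝ) (hS : Measurable S) (hξ : Measurable ξ)
    (h_le : ∀ᵐ ω ∂P, ξ ω ≤ S ω) (hS0 : ∀ᵐ ω ∂P, 0 ≤ S ω)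
    (l : ℝ) :
    (∫⁻ x in Set.Ioi (0 : ℝ),
        ENNReal.ofReal (Real.exp (-l * x)) *
          ∫⁻ ω, Set.indicator {ω | S ω < x}
            (fun ω => ENNReal.ofReal (f (x - ξ ω))) ω ∂P)
      ≤ (∫⁻ ω, ENNReal.ofReal (Real.exp (-l * S ω)) ∂P) *
          ∫⁻ x in Set.Ioi (0 : ℝ), ENNReal.ofReal (Real.exp (-l * x) * f x) := by
  set F : ℝ → Ω → ℝ≥0∞ := fun x ω => ENNReal.ofReal (Real.exp (-l * x)) *
    (Ioi (S ω)).indicator (fun x => ENNReal.ofReal (f (x - ξ ω))) x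
  have hF_meas : Measurable (Function.uncurry F) :=
    (by fun_prop : Measurable fun p : ℝ × Ω => ENNReal.ofReal (Real.exp (-l * p.1))).mul
      ((by fun_prop : Measurable fun p : ℝ × Ω => ENNReal.ofReal (f (p.1 - ξ p.2))).indicator
        (measurableSet_lt (hS.comp measurable_snd) measurable_fst))
  have h_inner (x : ℝ) : ENNReal.ofReal (Real.exp (-l * x)) *
      ∫⁻ ω, {ω | S ω < x}.indicator (fun ω => ENNReal.ofReal (f (x - ξ ω))) ω ∂P
        = ∫⁻ ω, F x ω ∂P := by
    rw [← lintegral_const_mul' _ _ ENNReal.ofReal_ne_top]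
    rfl
  simp_rw [h_inner]
  rw [lintegral_lintegral_swap hF_meas.aemeasurable, ← lintegral_mul_const _ (by fun_prop)]
  refine lintegral_mono_ae ?_
  filter_upwards [h_le, hS0] with ω hξS hS0ω
  exact laplace_indicator_Ioi_comp_sub_le hf_anti l hS0ω hξS

/-- for `f : [0,∞) → [0,∞)` decreasing and random variables `ξ ≤ S` a.s.,
`S ≥ 0` a.s., for every `λ > 0`:
`∫₀^∞ e^{-λx} E[1_{S<x} f(x-ξ)] dx ≤ E[e^{-λS}] ∫₀^∞ e^{-λx} f(x) dx`. -/
theorem stmt_5 {Ω : Type*} [MeasurableSpace Ω] (P : Measure Ω) [IsProbabilityMeasure P]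
    (f : ℝ → ℝ) (hf_meas : Measurable f)
    (hf_nonneg : ∀ x ≥ (0 : ℝ), 0 ≤ f x)
    (hf_anti : AntitoneOn f (Set.Ici 0))
    (S ξ : Ω → ℝ) (hS : Measurable S) (hξ : Measurable ξ)
    (h_le : ∀ᵐ ω ∂P, ξ ω ≤ S ω) (hS0 : ∀ᵐ ω ∂P, 0 ≤ S ω)
    (l : ℝ) (hl : 0 < l) :
    (∫⁻ x in Set.Ioi (0 : ℝ),
        ENNReal.ofReal (Real.exp (-l * x)) *
          ∫⁻ ω, Set.indicator {ω | S ω < x}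
            (fun ω => ENNReal.ofReal (f (x - ξ ω))) ω ∂P)
      ≤ (∫⁻ ω, ENNReal.ofReal (Real.exp (-l * S ω)) ∂P) *
          ∫⁻ x in Set.Ioi (0 : ℝ), ENNReal.ofReal (Real.exp (-l * x) * f x) :=
  stmt_5_general P f hf_meas hf_anti S ξ hS hξ h_le hS0 l
end

section
/- Let f : [0,∞) → [0,∞) be decreasing and let S, ξ be random variables with ξ ≤ S a.s. and S ≥ 0 a.s. Then for every λ > 0, ∫₀^∞ e^{−λx} x E[1_{{S<x}} f(x−ξ)] dx ≤ E[e^{−λS}] ∫₀^∞ e^{−λx} x f(x) dx + E[S e^{−λS}] ∫₀^∞ e^{−λx} f(x) dx. -/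
/-! On `{S < x}` monotonicity gives `f (x - ξ) ≤ f (x - S)`. After exchanging the integrals by
Tonelli, substitute `x = y + S` in each inner integral and split
`(y + S) e^{-λ(y+S)} = e^{-λS} · y e^{-λy} + S e^{-λS} · e^{-λy}`. -/

open MeasureTheory Set ENNReal Real

lemma ofReal_exp_neg_mul_add_mul_add_le (l s y : ℝ) :
    ENNReal.ofReal (exp (-l * (y + s)) * (y + s)) ≤
      ENNReal.ofReal (exp (-l * s)) * ENNReal.ofReal (exp (-l * y) * y) +
        ENNReal.ofReal (s * exp (-l * s)) * ENNReal.ofReal (exp (-l * y)) := by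
  have hsplit : exp (-l * (y + s)) * (y + s) =
      exp (-l * s) * (exp (-l * y) * y) + s * exp (-l * s) * exp (-l * y) := by
    rw [show -l * (y + s) = -l * y + -l * s by ring, exp_add]; ring
  rw [hsplit, ← ENNReal.ofReal_mul (exp_pos _).le, ← ENNReal.ofReal_mul' (exp_pos _).le]
  exact ENNReal.ofReal_add_le

lemma ofReal_exp_neg_mul_add_mul_add_mul_le (l s a : ℝ) {y : ℝ} (hy : 0 ≤ y) :
    ENNReal.ofReal (exp (-l * (y + s)) * (y + s)) * ENNReal.ofReal a ≤
      ENNReal.ofReal (exp (-l * s)) * ENNReal.ofReal (exp (-l * y) * y * a) +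
        ENNReal.ofReal (s * exp (-l * s)) * ENNReal.ofReal (exp (-l * y) * a) := by
  have hya : ENNReal.ofReal (exp (-l * y) * y * a) =
      ENNReal.ofReal (exp (-l * y) * y) * ENNReal.ofReal a :=
    ENNReal.ofReal_mul (mul_nonneg (exp_pos _).le hy)
  have ha : ENNReal.ofReal (exp (-l * y) * a) =
      ENNReal.ofReal (exp (-l * y)) * ENNReal.ofReal a :=
    ENNReal.ofReal_mul (exp_pos _).le
  rw [hya, ha, ← mul_assoc, ← mul_assoc, ← add_mul]
  gcongr
  exact ofReal_exp_neg_mul_add_mul_add_le l s y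

lemma setLIntegral_Ioi_eq_comp_add (c : ℝ) (g : ℝ → ℝ≥0∞) :
    ∫⁻ x in Ioi c, g x = ∫⁻ y in Ioi 0, g (y + c) := by
  have h := (measurePreserving_add_right volume c).setLIntegral_comp_preimage_emb
    (MeasurableEquiv.addRight c).measurableEmbedding g (Ioi c)
  rwa [show (· + c) ⁻¹' Ioi c = Ioi 0 by ext; simp, eq_comm] at h

lemma setLIntegral_Ioi_mul_indicator_comp_sub_le {f : ℝ → ℝ} (hf : Measurable f)
    (l s : ℝ) :
    ∫⁻ x in Ioi 0, ENNReal.ofReal (exp (-l * x) * x) *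
        (Ioi s).indicator (fun x => ENNReal.ofReal (f (x - s))) x ≤
      ENNReal.ofReal (exp (-l * s)) * (∫⁻ y in Ioi 0, ENNReal.ofReal (exp (-l * y) * y * f y)) +
        ENNReal.ofReal (s * exp (-l * s)) * ∫⁻ y in Ioi 0, ENNReal.ofReal (exp (-l * y) * f y) := by
  simp_rw [← indicator_mul_right _ (fun x => ENNReal.ofReal (exp (-l * x) * x))]
  calc _ ≤ ∫⁻ x in Ioi s, ENNReal.ofReal (exp (-l * x) * x) * ENNReal.ofReal (f (x - s))
          ∂volume.restrict (Ioi 0) :=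
        lintegral_indicator_le _ _
    _ ≤ ∫⁻ x in Ioi s, ENNReal.ofReal (exp (-l * x) * x) * ENNReal.ofReal (f (x - s)) :=
        lintegral_mono' (Measure.restrict_mono subset_rfl Measure.restrict_le_self) le_rfl
    _ = ∫⁻ y in Ioi 0,
          ENNReal.ofReal (exp (-l * (y + s)) * (y + s)) * ENNReal.ofReal (f y) := by
        rw [setLIntegral_Ioi_eq_comp_add s]
        simp only [add_sub_cancel_right]
    _ ≤ ∫⁻ y in Ioi 0,
          (ENNReal.ofReal (exp (-l * s)) * ENNReal.ofReal (exp (-l * y) * y * f y) +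
            ENNReal.ofReal (s * exp (-l * s)) * ENNReal.ofReal (exp (-l * y) * f y)) :=
        setLIntegral_mono' measurableSet_Ioi fun y hy =>
          ofReal_exp_neg_mul_add_mul_add_mul_le l s _ hy.le
    _ = _ := by
        rw [lintegral_add_left (by fun_prop), lintegral_const_mul _ (by fun_prop),
          lintegral_const_mul _ (by fun_prop)]

lemma lintegral_indicator_comp_sub_le {Ω : Type*} [MeasurableSpace Ω] {P : Measure Ω}
    {f : ℝ → ℝ} (hf : AntitoneOn f (Ici 0)) {S ξ : Ω → ℝ} (h_le : ∀ᵐ ω ∂P, ξ ω ≤ S ω) (x : ℝ) :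
    ∫⁻ ω, {ω | S ω < x}.indicator (fun ω => ENNReal.ofReal (f (x - ξ ω))) ω ∂P ≤
      ∫⁻ ω, (Ioi (S ω)).indicator (fun y => ENNReal.ofReal (f (y - S ω))) x ∂P := by
  refine lintegral_mono_ae (h_le.mono fun ω hξS => ?_)
  by_cases hx : S ω < x
  · simp only [indicator_of_mem (show ω ∈ {ω | S ω < x} from hx),
      indicator_of_mem (show x ∈ Ioi (S ω) from hx)]
    have hSx : x - S ω ∈ Ici 0 := sub_nonneg.mpr hx.le
    exact ENNReal.ofReal_le_ofReal
      (hf hSx (mem_Ici.mpr (hSx.out.trans (by linarith))) (by linarith))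
  · simp [indicator_of_notMem, hx]

theorem stmt_7_general {Ω : Type*} [MeasurableSpace Ω] (P : Measure Ω) [IsProbabilityMeasure P]
    (f : ℝ → ℝ) (hf_meas : Measurable f)
    (hf_anti : AntitoneOn f (Set.Ici 0))
    (S ξ : Ω → ℝ) (hS : Measurable S)
    (h_le : ∀ᵐ ω ∂P, ξ ω ≤ S ω)
    (l : ℝ) :
    (∫⁻ x in Set.Ioi (0 : ℝ),
        ENNReal.ofReal (Real.exp (-l * x) * x) *
          ∫⁻ ω, Set.indicator {ω | S ω < x}
            (fun ω => ENNReal.ofReal (f (x - ξ ω))) ω ∂P)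
      ≤ (∫⁻ ω, ENNReal.ofReal (Real.exp (-l * S ω)) ∂P) *
          (∫⁻ x in Set.Ioi (0 : ℝ), ENNReal.ofReal (Real.exp (-l * x) * x * f x))
        + (∫⁻ ω, ENNReal.ofReal (S ω * Real.exp (-l * S ω)) ∂P) *
            ∫⁻ x in Set.Ioi (0 : ℝ), ENNReal.ofReal (Real.exp (-l * x) * f x) := by
  set A := ∫⁻ y in Ioi 0, ENNReal.ofReal (exp (-l * y) * y * f y)
  set B := ∫⁻ y in Ioi 0, ENNReal.ofReal (exp (-l * y) * f y)
  set F : ℝ → Ω → ℝ≥0∞ := fun x ω =>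
    ENNReal.ofReal (exp (-l * x) * x) *
      (Ioi (S ω)).indicator (fun y => ENNReal.ofReal (f (y - S ω))) x
  have hF : Measurable (Function.uncurry F) := by
    refine Measurable.mul (by fun_prop) (Measurable.ite ?_ (by fun_prop) measurable_const)
    exact measurableSet_lt (hS.comp measurable_snd) measurable_fst
  calc _ ≤ ∫⁻ x in Ioi 0, ∫⁻ ω, F x ω ∂P := by
        refine lintegral_mono fun x => ?_
        rw [lintegral_const_mul' _ _ ofReal_ne_top]
        exact mul_le_mul_of_nonneg_left
          (lintegral_indicator_comp_sub_le hf_anti h_le x) zero_le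
    _ = ∫⁻ ω, (∫⁻ x in Ioi 0, F x ω) ∂P := lintegral_lintegral_swap hF.aemeasurable
    _ ≤ ∫⁻ ω, (ENNReal.ofReal (exp (-l * S ω)) * A +
          ENNReal.ofReal (S ω * exp (-l * S ω)) * B) ∂P :=
        lintegral_mono fun ω => setLIntegral_Ioi_mul_indicator_comp_sub_le hf_meas l (S ω)
    _ = _ := by
        rw [lintegral_add_left (by fun_prop), lintegral_mul_const _ (by fun_prop),
          lintegral_mul_const _ (by fun_prop)]

/-- for `f : [0,∞) → [0,∞)` decreasing and random variables `ξ ≤ S` a.s.,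
`S ≥ 0` a.s., for every `λ > 0`:
`∫₀^∞ e^{-λx} x E[1_{S<x} f(x-ξ)] dx ≤ E[e^{-λS}] ∫₀^∞ e^{-λx} x f(x) dx
   + E[S e^{-λS}] ∫₀^∞ e^{-λx} f(x) dx`. -/
theorem stmt_7 {Ω : Type*} [MeasurableSpace Ω] (P : Measure Ω) [IsProbabilityMeasure P]
    (f : ℝ → ℝ) (hf_meas : Measurable f)
    (hf_nonneg : ∀ x ≥ (0 : ℝ), 0 ≤ f x)
    (hf_anti : AntitoneOn f (Set.Ici 0))
    (S ξ : Ω → ℝ) (hS : Measurable S) (hξ : Measurable ξ)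
    (h_le : ∀ᵐ ω ∂P, ξ ω ≤ S ω) (hS0 : ∀ᵐ ω ∂P, 0 ≤ S ω)
    (l : ℝ) (hl : 0 < l) :
    (∫⁻ x in Set.Ioi (0 : ℝ),
        ENNReal.ofReal (Real.exp (-l * x) * x) *
          ∫⁻ ω, Set.indicator {ω | S ω < x}
            (fun ω => ENNReal.ofReal (f (x - ξ ω))) ω ∂P)
      ≤ (∫⁻ ω, ENNReal.ofReal (Real.exp (-l * S ω)) ∂P) *
          (∫⁻ x in Set.Ioi (0 : ℝ), ENNReal.ofReal (Real.exp (-l * x) * x * f x))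
        + (∫⁻ ω, ENNReal.ofReal (S ω * Real.exp (-l * S ω)) ∂P) *
            ∫⁻ x in Set.Ioi (0 : ℝ), ENNReal.ofReal (Real.exp (-l * x) * f x) :=
  stmt_7_general P f hf_meas hf_anti S ξ hS h_le l
end

section
/- Monotone density theorem, power case: let u : (0,∞) → [0,∞) be decreasing, let β ∈ (0,1) and c ≥ 0, and suppose lim_{x→∞} x^{−β} ∫₀^x u(z) dz = c. Then lim_{x→∞} x^{1−β} u(x) = c β. -/
open MeasureTheory
open scoped Topology

private lemma slope_rpow_tendsto (β : ℝ) :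
    Filter.Tendsto (fun t : ℝ => (t ^ β - 1) / (t - 1)) (𝓝[≠] (1:ℝ)) (𝓝 β) := by
  have h : HasDerivAt (fun x : ℝ => x ^ β) (β * (1:ℝ) ^ (β - 1)) 1 :=
    Real.hasDerivAt_rpow_const (Or.inl one_ne_zero)
  have h' := hasDerivAt_iff_tendsto_slope.mp h
  simp only [Real.one_rpow, mul_one] at h'
  refine h'.congr fun t => ?_
  simp [slope_def_field, Real.one_rpow]

private lemma key_bounds (u : ℝ → ℝ)
    (hu_anti : AntitoneOn u (Set.Ioi 0))
    (hu_int : ∀ x > (0:ℝ), IntervalIntegrable u volume 0 x)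
    {a b : ℝ} (ha : 0 < a) (hab : a ≤ b) :
    (b - a) * u b ≤ (∫ z in (0:ℝ)..b, u z) - ∫ z in (0:ℝ)..a, u z ∧
      (∫ z in (0:ℝ)..b, u z) - (∫ z in (0:ℝ)..a, u z) ≤ (b - a) * u a := by
  have hb : 0 < b := ha.trans_le hab
  have hint : IntervalIntegrable u volume a b :=
    (hu_int a ha).symm.trans (hu_int b hb)
  have hadd := intervalIntegral.integral_add_adjacent_intervals (hu_int a ha) hint
  have hlow : (b - a) * u b ≤ ∫ z in a..b, u z := by
    have h := intervalIntegral.integral_mono_on hab intervalIntegrable_const hint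
      (fun z hz => hu_anti (Set.mem_Ioi.mpr (ha.trans_le hz.1)) (Set.mem_Ioi.mpr hb) hz.2)
    simpa [smul_eq_mul, mul_comm] using h
  have hhigh : (∫ z in a..b, u z) ≤ (b - a) * u a := by
    have h := intervalIntegral.integral_mono_on hab hint intervalIntegrable_const
      (fun z hz => hu_anti (Set.mem_Ioi.mpr ha) (Set.mem_Ioi.mpr (ha.trans_le hz.1)) hz.1)
    simpa [smul_eq_mul, mul_comm] using h
  exact ⟨by linarith, by linarith⟩

set_option maxHeartbeats 2000000 in
/-- monotone density theorem, power case: if `u : (0,∞) → [0,∞)` is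
decreasing, locally integrable, `β ∈ (0,1)` and `x^{-β} ∫₀^x u(z) dz → c`, then
`x^{1-β} u(x) → cβ`. -/
theorem stmt_11 (u : ℝ → ℝ) (hu_nonneg : ∀ x > (0 : ℝ), 0 ≤ u x)
    (hu_anti : AntitoneOn u (Set.Ioi 0))
    (hu_int : ∀ x > (0 : ℝ), IntervalIntegrable u MeasureTheory.volume 0 x)
    (β c : ℝ) (hβ : β ∈ Set.Ioo (0 : ℝ) 1) (hc : 0 ≤ c)
    (hU : Filter.Tendsto (fun x : ℝ => x ^ (-β) * ∫ z in (0 : ℝ)..x, u z)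
      Filter.atTop (𝓝 c)) :
    Filter.Tendsto (fun x : ℝ => x ^ (1 - β) * u x) Filter.atTop (𝓝 (c * β)) := by
  obtain ⟨hβ0, hβ1⟩ := hβ
  rw [Metric.tendsto_nhds]
  intro ε hε
  set ε' : ℝ := ε / (4 * (c + 1)) with hε'def
  have hε' : 0 < ε' := by positivity
  have hcε' : c * ε' ≤ ε / 4 := by
    rw [hε'def, mul_div_assoc']
    rw [div_le_div_iff₀ (by positivity) (by norm_num : (0:ℝ) < 4)]
    nlinarith [mul_nonneg hc hε.le]
  -- pick t ∈ (1,2) with slope close to β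
  obtain ⟨t, htslope, ht1, ht2⟩ :
      ∃ t : ℝ, |(t ^ β - 1) / (t - 1) - β| < ε' ∧ 1 < t ∧ t < 2 := by
    have h1 : Filter.Tendsto (fun t : ℝ => (t ^ β - 1) / (t - 1)) (𝓝[>] (1:ℝ)) (𝓝 β) :=
      (slope_rpow_tendsto β).mono_left
        (nhdsWithin_mono 1 (fun x hx => ne_of_gt hx))
    have h2 : ∀ᶠ t in 𝓝[>] (1:ℝ), |(t ^ β - 1) / (t - 1) - β| < ε' := by
      have := Metric.tendsto_nhds.mp h1 ε' hε'
      simpa [Real.dist_eq] using this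
    have h3 : ∀ᶠ t in 𝓝[>] (1:ℝ), t ∈ Set.Ioo (1:ℝ) 2 :=
      Filter.eventually_mem_set.mpr (Ioo_mem_nhdsGT_of_mem ⟨le_refl 1, one_lt_two⟩)
    obtain ⟨t, h, ⟨a1, a2⟩⟩ := (h2.and h3).exists
    exact ⟨t, h, a1, a2⟩
  -- pick s ∈ (0,1) with slope close to β
  obtain ⟨s, hsslope, hs0, hs1⟩ :
      ∃ s : ℝ, |(s ^ β - 1) / (s - 1) - β| < ε' ∧ 0 < s ∧ s < 1 := by
    have h1 : Filter.Tendsto (fun t : ℝ => (t ^ β - 1) / (t - 1)) (𝓝[<] (1:ℝ)) (𝓝 β) :=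
      (slope_rpow_tendsto β).mono_left
        (nhdsWithin_mono 1 (fun x hx => ne_of_lt hx))
    have h2 : ∀ᶠ t in 𝓝[<] (1:ℝ), |(t ^ β - 1) / (t - 1) - β| < ε' := by
      have := Metric.tendsto_nhds.mp h1 ε' hε'
      simpa [Real.dist_eq] using this
    have h3 : ∀ᶠ t in 𝓝[<] (1:ℝ), t ∈ Set.Ioo (0:ℝ) 1 :=
      Filter.eventually_mem_set.mpr (Ioo_mem_nhdsLT_of_mem ⟨zero_lt_one, le_refl 1⟩)
    obtain ⟨s, h, ⟨a1, a2⟩⟩ := (h2.and h3).exists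
    exact ⟨s, h, a1, a2⟩
  have h1s : (0:ℝ) < 1 - s := by linarith
  have ht1' : (0:ℝ) < t - 1 := by linarith
  set δ : ℝ := min (ε * (1 - s) / 4) (ε * (t - 1) / 12) with hδdef
  have hδ : 0 < δ := lt_min (by positivity) (by positivity)
  have hδ1 : δ ≤ ε * (1 - s) / 4 := min_le_left _ _
  have hδ2 : δ ≤ ε * (t - 1) / 12 := min_le_right _ _
  have hFev : ∀ᶠ x in Filter.atTop,
      |x ^ (-β) * (∫ z in (0:ℝ)..x, u z) - c| < δ := by
    have := Metric.tendsto_nhds.mp hU δ hδ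
    simpa [Real.dist_eq] using this
  have hsmul : Filter.Tendsto (fun x : ℝ => s * x) Filter.atTop Filter.atTop :=
    Filter.Tendsto.const_mul_atTop hs0 Filter.tendsto_id
  have htmul : Filter.Tendsto (fun x : ℝ => t * x) Filter.atTop Filter.atTop :=
    Filter.Tendsto.const_mul_atTop (by linarith) Filter.tendsto_id
  filter_upwards [hFev, hsmul.eventually hFev, htmul.eventually hFev,
    Filter.eventually_gt_atTop (0:ℝ)] with x hFx hFs hFt hx0
  rw [Real.dist_eq, abs_lt]
  -- notation
  set U : ℝ → ℝ := fun y => ∫ z in (0:ℝ)..y, u z with hUdef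
  have hFx' := abs_lt.mp hFx
  have hFs' := abs_lt.mp hFs
  have hFt' := abs_lt.mp hFt
  set Fx : ℝ := x ^ (-β) * U x with hFxdef
  set Fs : ℝ := (s * x) ^ (-β) * U (s * x) with hFsdef
  set Ft : ℝ := (t * x) ^ (-β) * U (t * x) with hFtdef
  set y : ℝ := x ^ (1 - β) * u x with hydef
  -- rpow identities
  have hxpos : (0:ℝ) < x ^ (-β) := Real.rpow_pos_of_pos hx0 _
  have hx1β : x ^ (1 - β) = x * x ^ (-β) := by
    rw [show (1:ℝ) - β = 1 + (-β) by ring, Real.rpow_add hx0, Real.rpow_one]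
  have hsplit_s : x ^ (-β) = s ^ β * (s * x) ^ (-β) := by
    rw [Real.mul_rpow hs0.le hx0.le, ← mul_assoc, ← Real.rpow_add hs0]
    simp
  have hsplit_t : x ^ (-β) = t ^ β * (t * x) ^ (-β) := by
    rw [Real.mul_rpow (by linarith : (0:ℝ) ≤ t) hx0.le, ← mul_assoc,
      ← Real.rpow_add (by linarith : (0:ℝ) < t)]
    simp
  -- key inequalities
  have hkey1 := (key_bounds u hu_anti hu_int (mul_pos hs0 hx0)
    (by nlinarith : s * x ≤ x)).1
  have hkey2 := (key_bounds u hu_anti hu_int hx0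
    (by nlinarith : x ≤ t * x)).2
  -- hkey1 : (x - s*x) * u x ≤ U x - U (s*x)
  -- hkey2 : U (t*x) - U x ≤ (t*x - x) * u x
  have hA : (1 - s) * y ≤ Fx - s ^ β * Fs := by
    have h := mul_le_mul_of_nonneg_left hkey1 hxpos.le
    calc (1 - s) * y = x ^ (-β) * ((x - s * x) * u x) := by
          rw [hydef, hx1β]; ring
      _ ≤ x ^ (-β) * (U x - U (s * x)) := h
      _ = Fx - s ^ β * Fs := by rw [hFxdef, hFsdef, hsplit_s]; ring
  have hB : t ^ β * Ft - Fx ≤ (t - 1) * y := by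
    have h := mul_le_mul_of_nonneg_left hkey2 hxpos.le
    calc t ^ β * Ft - Fx = x ^ (-β) * (U (t * x) - U x) := by
          rw [hFxdef, hFtdef, hsplit_t]; ring
      _ ≤ x ^ (-β) * ((t * x - x) * u x) := h
      _ = (t - 1) * y := by rw [hydef, hx1β]; ring
  -- numeric facts
  have hsβ0 : (0:ℝ) < s ^ β := Real.rpow_pos_of_pos hs0 _
  have hsβ1 : s ^ β ≤ 1 := Real.rpow_le_one hs0.le hs1.le hβ0.le
  have htβ0 : (0:ℝ) < t ^ β := Real.rpow_pos_of_pos (by linarith) _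
  have htβ2 : t ^ β ≤ t := by
    calc t ^ β ≤ t ^ (1:ℝ) := Real.rpow_le_rpow_of_exponent_le ht1.le hβ1.le
      _ = t := Real.rpow_one t
  -- slope rearrangements
  have hσ : ((s ^ β - 1) / (s - 1)) * (1 - s) = 1 - s ^ β := by
    rw [div_mul_eq_mul_div, div_eq_iff (by linarith : s - 1 ≠ 0)]
    ring
  have hτ : ((t ^ β - 1) / (t - 1)) * (t - 1) = t ^ β - 1 := by
    rw [div_mul_eq_mul_div, div_eq_iff (by linarith : t - 1 ≠ 0)]
  have hσ' := abs_lt.mp hsslope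
  have hτ' := abs_lt.mp htslope
  -- upper bound
  have hcs : c * (1 - s ^ β) ≤ (β + ε') * (c * (1 - s)) := by
    have h2 : c * ((s ^ β - 1) / (s - 1)) ≤ c * (β + ε') :=
      mul_le_mul_of_nonneg_left (by linarith [hσ'.2]) hc
    calc c * (1 - s ^ β) = (c * ((s ^ β - 1) / (s - 1))) * (1 - s) := by
          rw [mul_assoc, hσ]
      _ ≤ (c * (β + ε')) * (1 - s) := mul_le_mul_of_nonneg_right h2 h1s.le
      _ = (β + ε') * (c * (1 - s)) := by ring
  -- lower bound
  have hct : (β - ε') * (c * (t - 1)) ≤ c * (t ^ β - 1) := by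
    have h2 : c * (β - ε') ≤ c * ((t ^ β - 1) / (t - 1)) :=
      mul_le_mul_of_nonneg_left (by linarith [hτ'.1]) hc
    calc (β - ε') * (c * (t - 1)) = (c * (β - ε')) * (t - 1) := by ring
      _ ≤ (c * ((t ^ β - 1) / (t - 1))) * (t - 1) :=
          mul_le_mul_of_nonneg_right h2 ht1'.le
      _ = c * (t ^ β - 1) := by rw [mul_assoc, hτ]
  have hcε's : c * ε' * (1 - s) ≤ ε / 4 * (1 - s) :=
    mul_le_mul_of_nonneg_right hcε' h1s.le
  have hcε't : c * ε' * (t - 1) ≤ ε / 4 * (t - 1) :=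
    mul_le_mul_of_nonneg_right hcε' ht1'.le
  -- products with δ
  have hsFs : s ^ β * (c - δ) ≤ s ^ β * Fs :=
    mul_le_mul_of_nonneg_left (by linarith [hFs'.1]) hsβ0.le
  have htFt : t ^ β * (c - δ) ≤ t ^ β * Ft :=
    mul_le_mul_of_nonneg_left (by linarith [hFt'.1]) htβ0.le
  have hδs : δ * s ^ β ≤ δ * 1 := mul_le_mul_of_nonneg_left hsβ1 hδ.le
  have hδt : δ * t ^ β ≤ δ * 2 :=
    mul_le_mul_of_nonneg_left (by linarith : t ^ β ≤ 2) hδ.le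
  have hεs : 0 < ε * (1 - s) := mul_pos hε h1s
  have hεt : 0 < ε * (t - 1) := mul_pos hε ht1'
  constructor
  · -- lower: c*β - ε < y
    have hup : (t - 1) * (c * β - ε) < (t - 1) * y := by
      linarith only [hB, htFt, hFx'.2, hδt, hct, hcε't, hδ2, hεt]
    linarith [(mul_lt_mul_iff_right₀ ht1').mp hup]
  · -- upper: y < c*β + ε
    have hup : (1 - s) * y < (1 - s) * (c * β + ε) := by
      linarith only [hA, hsFs, hFx'.2, hδs, hcs, hcε's, hδ1, hεs]
    linarith [(mul_lt_mul_iff_right₀ h1s).mp hup]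
end
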